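/- Let s be a positive integer, and let d_1 ≥ ⋯ ≥ d_s ≥ 0 and t_1 ≥ ⋯ ≥ t_s ≥ 0 be non-increasing sequences of nonnegative integers with d_i ≥ t_i for i = 1,…,s. Let A_1 ≥ ⋯ ≥ A_s ≥ 0 and B_1 ≥ ⋯ ≥ B_s ≥ 0 be non-increasing sequences of nonnegative integers such that (d_1 − t_1, …, d_s − t_s) ≺ (A_1 + B_1, …, A_s + B_s). Then there exists a non-increasing sequence f_1 ≥ ⋯ ≥ f_s of nonnegative integers such that d_i ≥ f_i ≥ t_i for i = 1,…,s, and (f_1 − t_1, …, f_s − t_s) ≺ (A_1, …, A_s), and (d_1 − f_1, …, d_s − f_s) ≺ (B_1, …, B_s). -/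

import Mathlib

/-!
First split `c = d - t` as `c = a + b` with `a ≺ A` and `b ≺ B`. Encode `A` and `B` by the
columns of their Young diagrams: `c ≺ A + B` is then the Gale–Ryser condition for a 0-1 matrix
with row sums `c` whose columns are those of `A` together with those of `B`, and the entries of
row `i` in the columns of `A` (resp. `B`) give `a i` (resp. `b i`).

Then `f = t + a` meets every requirement except monotonicity. If `f x < f y` with `x < y`,
moving one unit from `f y` to `f x` keeps `t ≤ f ≤ d` because `d` and `t` are antitone, replaces
`f - t` and `d - f` by vectors they majorize (a Robin Hood transfer), and lowers `∑ i * f i`;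
so repeating this ends at an antitone `f`.
-/

/-- The sum of the `j` largest entries of a multiset of nonnegative integers
(realized as the maximum of the sums of submultisets with at most `j` elements). -/
def kMaxSum (M : Multiset ℕ) (j : ℕ) : ℕ :=
  ((M.powerset.filter (fun T => Multiset.card T ≤ j)).map Multiset.sum).sup

/-- Classical majorization of (the decreasing rearrangements of) two multisets of
nonnegative integers: equal total sums, and for every `j` the sum of the `j` largest
entries of `M` is at most the sum of the `j` largest entries of `N`. -/
def Majorized (M N : Multiset ℕ) : Prop :=
  M.sum = N.sum ∧ ∀ j, kMaxSum M j ≤ kMaxSum N j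

/-- The multiset of entries of a finite tuple. -/
def tupleMul {s : ℕ} (a : Fin s → ℕ) : Multiset ℕ := Multiset.map a Finset.univ.val

open Finset

theorem Multiset.exists_le_eq_map {α β : Type*} {f : α → β} {T : Multiset β} {u : Multiset α}
    (h : T ≤ u.map f) : ∃ u' ≤ u, T = u'.map f := by
  induction T using Quotient.inductionOn with | h l₁ => ?_
  induction u using Quotient.inductionOn with | h l => ?_
  obtain ⟨l₂, hperm, hsub⟩ := Multiset.coe_le.1 h
  obtain ⟨l₃, hl₃, rfl⟩ := List.sublist_map_iff.1 hsub
  exact ⟨l₃, Multiset.coe_le.2 hl₃.subperm, (Multiset.coe_eq_coe.2 hperm.symm).trans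
    (Multiset.map_coe f l₃).symm⟩

theorem sum_le_kMaxSum {M T : Multiset ℕ} {j : ℕ} (hT : T ≤ M) (hj : Multiset.card T ≤ j) :
    T.sum ≤ kMaxSum M j :=
  Multiset.le_sup <| Multiset.mem_map_of_mem _ <|
    Multiset.mem_filter.2 ⟨Multiset.mem_powerset.2 hT, hj⟩

theorem kMaxSum_le_iff {M : Multiset ℕ} {j X : ℕ} :
    kMaxSum M j ≤ X ↔ ∀ T ≤ M, Multiset.card T ≤ j → T.sum ≤ X := by
  simp only [kMaxSum, Multiset.sup_le, Multiset.mem_map, Multiset.mem_filter,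
    Multiset.mem_powerset]
  grind

theorem kMaxSum_mono (M : Multiset ℕ) : Monotone (kMaxSum M) := fun _ _ hj =>
  kMaxSum_le_iff.2 fun _ hT hc => sum_le_kMaxSum hT (hc.trans hj)

theorem kMaxSum_le_sum (M : Multiset ℕ) (j : ℕ) : kMaxSum M j ≤ M.sum := by
  refine kMaxSum_le_iff.2 fun T hT _ => ?_
  obtain ⟨U, rfl⟩ := Multiset.le_iff_exists_add.1 hT
  simp

section Tuple

variable {s : ℕ}

theorem sum_le_kMaxSum_tupleMul (v : Fin s → ℕ) {S : Finset (Fin s)} {j : ℕ} (hS : #S ≤ j) :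
    ∑ i ∈ S, v i ≤ kMaxSum (tupleMul v) j :=
  sum_le_kMaxSum (Multiset.map_le_map (val_le_iff.2 (subset_univ S))) (by simpa using hS)

theorem kMaxSum_tupleMul_le_iff {v : Fin s → ℕ} {j X : ℕ} :
    kMaxSum (tupleMul v) j ≤ X ↔ ∀ S : Finset (Fin s), #S ≤ j → ∑ i ∈ S, v i ≤ X := by
  refine ⟨fun h S hS => (sum_le_kMaxSum_tupleMul v hS).trans h, fun h => ?_⟩
  refine kMaxSum_le_iff.2 fun T hT hj => ?_
  obtain ⟨u, hu, rfl⟩ := Multiset.exists_le_eq_map hT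
  have hnd : u.Nodup := Multiset.nodup_of_le hu univ.nodup
  simpa using h ⟨u, hnd⟩ (by simpa using hj)

def WeaklyMajorized (x y : Fin s → ℕ) : Prop :=
  ∀ S : Finset (Fin s), ∑ i ∈ S, x i ≤ kMaxSum (tupleMul y) #S

theorem WeaklyMajorized.sum_le {x y : Fin s → ℕ} (h : WeaklyMajorized x y) :
    ∑ i, x i ≤ ∑ i, y i :=
  (h univ).trans (kMaxSum_le_sum _ _)

theorem majorized_tupleMul_iff {x y : Fin s → ℕ} :
    Majorized (tupleMul x) (tupleMul y) ↔ ∑ i, x i = ∑ i, y i ∧ WeaklyMajorized x y :=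
  ⟨fun h => ⟨h.1, fun _ => (sum_le_kMaxSum_tupleMul x le_rfl).trans (h.2 _)⟩,
    fun h => ⟨h.1, fun _ => kMaxSum_tupleMul_le_iff.2 fun S hS => (h.2 S).trans
      (kMaxSum_mono _ hS)⟩⟩

theorem Majorized.trans {M N P : Multiset ℕ} (h₁ : Majorized M N) (h₂ : Majorized N P) :
    Majorized M P :=
  ⟨h₁.1.trans h₂.1, fun j => (h₁.2 j).trans (h₂.2 j)⟩

theorem majorized_tupleMul_of_transfer {φ ψ : Fin s → ℕ} {x y : Fin s} (hxy : x ≠ y)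
    (hoff : ∀ z, z ≠ x → z ≠ y → φ z = ψ z) (hsum : φ x + φ y = ψ x + ψ y)
    (hx : φ x ≤ ψ y) (hy : φ y ≤ ψ y) : Majorized (tupleMul φ) (tupleMul ψ) := by
  have hrest : ∀ T : Finset (Fin s), x ∉ T → y ∉ T → ∑ i ∈ T, φ i = ∑ i ∈ T, ψ i :=
    fun T hxT hyT => sum_congr rfl fun z hz => hoff z (ne_of_mem_of_not_mem hz hxT)
      (ne_of_mem_of_not_mem hz hyT)
  have hpair : ∀ T : Finset (Fin s), x ∈ T → y ∈ T → ∑ i ∈ T, φ i = ∑ i ∈ T, ψ i := by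
    intro T hxT hyT
    have hyT' : y ∈ T.erase x := mem_erase.2 ⟨hxy.symm, hyT⟩
    rw [← add_sum_erase T φ hxT, ← add_sum_erase T ψ hxT, ← add_sum_erase _ φ hyT',
      ← add_sum_erase _ ψ hyT', hrest _ (fun h => notMem_erase x T (mem_of_mem_erase h))
      (notMem_erase y _)]
    omega
  refine majorized_tupleMul_iff.2 ⟨hpair univ (mem_univ x) (mem_univ y), fun S => ?_⟩
  by_cases hyS : y ∈ S
  · refine le_trans ?_ (sum_le_kMaxSum_tupleMul ψ le_rfl)
    by_cases hxS : x ∈ S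
    · exact (hpair S hxS hyS).le
    · rw [← add_sum_erase S φ hyS, ← add_sum_erase S ψ hyS,
        hrest _ (fun h => hxS (mem_of_mem_erase h)) (notMem_erase y S)]
      omega
  · by_cases hxS : x ∈ S
    · have hyS' : y ∉ S.erase x := fun h => hyS (mem_of_mem_erase h)
      refine le_trans ?_ (sum_le_kMaxSum_tupleMul ψ (S := insert y (S.erase x))
        (by rw [card_insert_of_notMem hyS', card_erase_add_one hxS]))
      rw [← add_sum_erase S φ hxS, sum_insert hyS', hrest _ (notMem_erase x S) hyS']
      omega
    · exact (hrest S hxS hyS).le.trans (sum_le_kMaxSum_tupleMul ψ le_rfl)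

end Tuple

section MoveUnit

variable {ι : Type*} [DecidableEq ι]

def moveUnit (f : ι → ℕ) (src dst : ι) : ι → ℕ :=
  Function.update (Function.update f dst (f dst + 1)) src (f src - 1)

theorem moveUnit_src (f : ι → ℕ) (src dst : ι) : moveUnit f src dst src = f src - 1 :=
  Function.update_self ..

theorem moveUnit_dst (f : ι → ℕ) {src dst : ι} (h : dst ≠ src) :
    moveUnit f src dst dst = f dst + 1 := by
  simp [moveUnit, Function.update_of_ne h]

theorem moveUnit_of_ne (f : ι → ℕ) {src dst z : ι} (hs : z ≠ src) (hd : z ≠ dst) :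
    moveUnit f src dst z = f z := by
  simp [moveUnit, Function.update_of_ne hs, Function.update_of_ne hd]

theorem moveUnit_add_ite (f : ι → ℕ) {src dst : ι} (hne : dst ≠ src) (hsrc : 0 < f src)
    (z : ι) :
    moveUnit f src dst z + (if z = src then 1 else 0) = f z + if z = dst then 1 else 0 := by
  by_cases hs : z = src
  · subst hs
    rw [moveUnit_src, if_pos rfl, if_neg hne.symm]
    omega
  by_cases hd : z = dst
  · subst hd
    rw [moveUnit_dst f hne, if_neg hs, if_pos rfl]
  · rw [moveUnit_of_ne f hs hd, if_neg hs, if_neg hd]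

end MoveUnit

section Exchange

variable {s : ℕ}

theorem sum_mul_moveUnit_lt {f : Fin s → ℕ} {x y : Fin s} (hxy : x < y) (hy : 0 < f y) :
    ∑ i : Fin s, (i : ℕ) * moveUnit f y x i < ∑ i : Fin s, (i : ℕ) * f i := by
  have key := sum_congr rfl fun (i : Fin s) (_ : i ∈ univ) =>
    congrArg ((i : ℕ) * ·) (moveUnit_add_ite f hxy.ne hy i)
  simp only [mul_add, mul_ite, mul_one, mul_zero, sum_add_distrib, sum_ite_eq', mem_univ,
    if_true] at key
  have : (x : ℕ) < y := hxy
  omega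

theorem exists_antitone_of_moveUnit {P : (Fin s → ℕ) → Prop}
    (hP : ∀ f x y, P f → x < y → f x < f y → P (moveUnit f y x)) {f : Fin s → ℕ} (hf : P f) :
    ∃ g, Antitone g ∧ P g := by
  induction hN : ∑ i : Fin s, (i : ℕ) * f i using Nat.strong_induction_on generalizing f with
  | _ N ih =>
  by_cases hanti : Antitone f
  · exact ⟨f, hanti, hf⟩
  obtain ⟨x, y, hxy, hlt⟩ : ∃ x y, x ≤ y ∧ f x < f y := by simpa [Antitone] using hanti
  have hxy' : x < y := lt_of_le_of_ne hxy (by rintro rfl; exact lt_irrefl _ hlt)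
  exact ih _ (hN ▸ sum_mul_moveUnit_lt hxy' (by omega)) (hP f x y hf hxy' hlt) rfl

theorem moveUnit_interpolant {d t f : Fin s → ℕ} (hd : Antitone d) (ht : Antitone t)
    (hf : ∀ i, t i ≤ f i ∧ f i ≤ d i) {x y : Fin s} (hxy : x < y) (hlt : f x < f y) :
    (∀ i, t i ≤ moveUnit f y x i ∧ moveUnit f y x i ≤ d i) ∧
      Majorized (tupleMul fun i => moveUnit f y x i - t i) (tupleMul fun i => f i - t i) ∧
      Majorized (tupleMul fun i => d i - moveUnit f y x i) (tupleMul fun i => d i - f i) := by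
  have hx := moveUnit_dst f hxy.ne
  have hy := moveUnit_src f y x
  have hoff := fun z (hzy : z ≠ y) (hzx : z ≠ x) => moveUnit_of_ne f hzy hzx
  have := hd hxy.le; have := ht hxy.le; have := hf x; have := hf y
  refine ⟨fun z => ?_, majorized_tupleMul_of_transfer hxy.ne (fun z hzx hzy => ?_)
    (by omega) (by omega) (by omega),
    majorized_tupleMul_of_transfer hxy.ne.symm (fun z hzy hzx => ?_)
    (by omega) (by omega) (by omega)⟩
  · by_cases hzy : z = y
    · subst hzy; omega
    by_cases hzx : z = x
    · subst hzx; omega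
    · rw [hoff z hzy hzx]; exact hf z
  all_goals rw [hoff z hzy hzx]

end Exchange

section GaleRyser

variable {ι κ : Type*} [DecidableEq ι] [Fintype κ] [DecidableEq κ]

theorem exists_finset_card_eq_top (h : κ → ℕ) {k : ℕ} (hk : k ≤ Fintype.card κ) :
    ∃ T : Finset κ, #T = k ∧ ∀ l ∈ T, ∀ l' ∉ T, h l' ≤ h l := by
  induction k with
  | zero => exact ⟨∅, rfl, by simp⟩
  | succ k ih =>
    obtain ⟨T, hTk, hT⟩ := ih (by omega)
    obtain ⟨m, hm, hmax⟩ := Tᶜ.exists_max_image h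
      (card_pos.1 (by rw [card_compl]; omega))
    refine ⟨insert m T, by rw [card_insert_of_notMem (mem_compl.1 hm), hTk], ?_⟩
    intro l hl l' hl'
    rw [mem_insert, not_or] at hl'
    rcases mem_insert.1 hl with rfl | hl
    · exact hmax l' (mem_compl.2 hl'.2)
    · exact hT l hl l' hl'.2

-- Removing one cell from each of the `#T` tallest columns keeps the Gale–Ryser condition for
-- rows whose entries are at most `#T`.
theorem le_sum_min_sub_of_top {h : κ → ℕ} {T : Finset κ} (hpos : ∀ l ∈ T, 0 < h l)
    (htop : ∀ l ∈ T, ∀ l' ∉ T, h l' ≤ h l) {j X : ℕ} (hX : X ≤ j * #T)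
    (hdom : #T + X ≤ ∑ l, min (h l) (j + 1)) :
    X ≤ ∑ l, min (h l - if l ∈ T then 1 else 0) j := by
  by_cases hbig : #T ≤ #{l | j < h l}
  · calc X ≤ j * #T := hX
      _ ≤ ∑ l with j < h l, j := by rw [sum_const, smul_eq_mul, mul_comm]; gcongr
      _ ≤ ∑ l with j < h l, min (h l - if l ∈ T then 1 else 0) j :=
        sum_le_sum fun l hl => by have := (mem_filter.1 hl).2; split_ifs <;> omega
      _ ≤ _ := sum_le_sum_of_subset (filter_subset _ _)
  · have hshort : ∀ l ∉ T, h l ≤ j := by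
      intro l hl
      by_contra hlj
      refine hbig (le_of_lt ?_)
      calc #T < #(insert l T) := by rw [card_insert_of_notMem hl]; omega
        _ ≤ _ := card_le_card fun l' hl' => by
          rcases mem_insert.1 hl' with rfl | hl'
          · exact mem_filter.2 ⟨mem_univ _, by omega⟩
          · exact mem_filter.2 ⟨mem_univ _, lt_of_lt_of_le (by omega) (htop l' hl' l hl)⟩
    have hpt : ∀ l, min (h l) (j + 1) ≤ min (h l - if l ∈ T then 1 else 0) j +
        if l ∈ T then 1 else 0 := by
      intro l
      by_cases hl : l ∈ T
      · have := hpos l hl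
        rw [if_pos hl]
        omega
      · have := hshort l hl
        rw [if_neg hl]
        omega
    have := hdom.trans (sum_le_sum fun l (_ : l ∈ univ) => hpt l)
    rw [sum_add_distrib, sum_boole, filter_univ_mem, Nat.cast_id] at this
    omega

-- Gale–Ryser: `R i` is row `i` of a 0-1 matrix with row sums `c` and column sums at most `h`.
-- The largest row takes the tallest columns.
theorem exists_rows_of_sum_le_sum_min (c : ι → ℕ) (U : Finset ι) (h : κ → ℕ)
    (hdom : ∀ S ⊆ U, ∑ i ∈ S, c i ≤ ∑ l, min (h l) #S) :
    ∃ R : ι → Finset κ, (∀ i ∈ U, #(R i) = c i) ∧ ∀ l, #{i ∈ U | l ∈ R i} ≤ h l := by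
  induction U using Finset.strongInduction generalizing h with
  | H U ih =>
  rcases U.eq_empty_or_nonempty with rfl | hU
  · exact ⟨fun _ => ∅, by simp, by simp⟩
  obtain ⟨i₀, hi₀, hmax⟩ := U.exists_max_image c hU
  have hk : c i₀ ≤ #{l | 0 < h l} := by
    calc c i₀ ≤ ∑ l, min (h l) 1 := by simpa using hdom {i₀} (singleton_subset_iff.2 hi₀)
      _ = #{l | 0 < h l} := by
        rw [card_filter]; exact sum_congr rfl fun l _ => by split_ifs <;> omega
  obtain ⟨T, hTk, htop⟩ := exists_finset_card_eq_top h (hk.trans (card_le_univ _))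
  have hpos : ∀ l ∈ T, 0 < h l := by
    intro l hl
    by_contra h0
    have : ({l' | 0 < h l'} : Finset κ) ⊆ T.erase l := fun l' hl' => by
      have := (mem_filter.1 hl').2
      exact mem_erase.2 ⟨by rintro rfl; omega,
        by by_contra hl'T; have := htop l hl l' hl'T; omega⟩
    have := card_le_card this
    rw [card_erase_of_mem hl] at this
    have := card_pos.2 ⟨l, hl⟩
    omega
  obtain ⟨R', hR'card, hR'col⟩ := ih (U.erase i₀) (erase_ssubset hi₀)
    (fun l => h l - if l ∈ T then 1 else 0) fun S hS => by
      have hi₀S : i₀ ∉ S := fun h => notMem_erase i₀ U (hS h)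
      have := hdom (insert i₀ S) (insert_subset hi₀ (hS.trans (erase_subset _ _)))
      rw [sum_insert hi₀S, card_insert_of_notMem hi₀S] at this
      refine le_sum_min_sub_of_top hpos htop ?_ (by rwa [hTk])
      rw [hTk, ← smul_eq_mul]
      exact sum_le_card_nsmul _ _ _ fun i hi => hmax i (mem_of_mem_erase (hS hi))
  refine ⟨Function.update R' i₀ T, fun i hi => ?_, fun l => ?_⟩
  · by_cases hii₀ : i = i₀
    · subst hii₀; simpa
    · simpa [hii₀] using hR'card i (mem_erase.2 ⟨hii₀, hi⟩)
  · have hrest :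
        {i ∈ U.erase i₀ | l ∈ Function.update R' i₀ T i} = {i ∈ U.erase i₀ | l ∈ R' i} :=
      filter_congr fun i hi => by rw [Function.update_of_ne (ne_of_mem_erase hi)]
    have hcol := hR'col l
    rw [← insert_erase hi₀, filter_insert, Function.update_self, hrest]
    split_ifs at hcol ⊢ with hl
    · rw [card_insert_of_notMem (by simp)]
      have := hpos l hl
      omega
    · simpa using hcol

end GaleRyser

section Columns

theorem sum_card_le_sum_min {ι κ : Type*} [Fintype ι] [Fintype κ] [DecidableEq κ]
    {R : ι → Finset κ} {h : κ → ℕ} (hR : ∀ l, #{i | l ∈ R i} ≤ h l) (S : Finset ι) :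
    ∑ i ∈ S, #(R i) ≤ ∑ l, min (h l) #S := by
  have hdc := sum_card_bipartiteAbove_eq_sum_card_bipartiteBelow (fun i l => l ∈ R i)
    (s := S) (t := univ)
  simp only [bipartiteAbove, bipartiteBelow, filter_univ_mem] at hdc
  rw [hdc]
  exact sum_le_sum fun l _ =>
    le_min ((card_le_card (filter_subset_filter _ (subset_univ S))).trans (hR l))
      (card_filter_le _ _)

variable {s : ℕ}

-- `#{i | l < v i}` is the height of the `l`-th column of the Young diagram of `v`.
theorem sum_le_sum_min_card_lt (v : Fin s → ℕ) {M : ℕ} (hM : ∀ i, v i ≤ M)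
    (S : Finset (Fin s)) :
    ∑ i ∈ S, v i ≤ ∑ l : Fin M, min #{i | (l : ℕ) < v i} #S := by
  have := sum_card_le_sum_min (R := fun i => {l : Fin M | (l : ℕ) < v i})
    (h := fun l => #{i | (l : ℕ) < v i}) (fun l => by simp) S
  simpa [Fin.card_filter_val_lt, hM] using this

theorem min_card_lt_le_card {v : Fin s → ℕ} (hv : Antitone v) (l j : ℕ) :
    min #{i | l < v i} j ≤ #{i : Fin s | (i : ℕ) < j ∧ l < v i} := by
  by_cases hex : ∃ p, l < v p ∧ j ≤ p
  · obtain ⟨p, hlp, hjp⟩ := hex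
    refine (min_le_right _ _).trans ?_
    calc j = #{i : Fin s | (i : ℕ) < j} := by rw [Fin.card_filter_val_lt]; omega
      _ ≤ _ := card_le_card fun i hi => by
        simp only [mem_filter, mem_univ, true_and] at hi ⊢
        exact ⟨hi, hlp.trans_le (hv (Fin.le_def.2 (by omega)))⟩
  · push Not at hex
    exact (min_le_left _ _).trans (card_le_card fun i hi => by
      simp only [mem_filter, mem_univ, true_and] at hi ⊢
      exact ⟨hex i hi, hi⟩)

theorem sum_min_card_lt_le_kMaxSum {v : Fin s → ℕ} (hv : Antitone v) (M j : ℕ) :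
    ∑ l : Fin M, min #{i | (l : ℕ) < v i} j ≤ kMaxSum (tupleMul v) j := by
  set I : Finset (Fin s) := {i | (i : ℕ) < j}
  have hdc := sum_card_bipartiteAbove_eq_sum_card_bipartiteBelow
    (fun (i : Fin s) (l : Fin M) => (l : ℕ) < v i) (s := I) (t := univ)
  simp only [bipartiteAbove, bipartiteBelow, Fin.card_filter_val_lt, I, filter_filter] at hdc
  calc ∑ l : Fin M, min #{i | (l : ℕ) < v i} j
      ≤ ∑ l : Fin M, #{i : Fin s | (i : ℕ) < j ∧ l < v i} :=
        sum_le_sum fun l _ => min_card_lt_le_card hv l j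
    _ = ∑ i ∈ I, min M (v i) := hdc.symm
    _ ≤ ∑ i ∈ I, v i := sum_le_sum fun i _ => min_le_right _ _
    _ ≤ kMaxSum (tupleMul v) j := sum_le_kMaxSum_tupleMul v (by
        simp only [I, Fin.card_filter_val_lt]; omega)

end Columns

theorem exists_add_eq_of_majorized_add {s : ℕ} {c A B : Fin s → ℕ} (hA : Antitone A)
    (hB : Antitone B) (hmaj : Majorized (tupleMul c) (tupleMul fun i => A i + B i)) :
    ∃ a b : Fin s → ℕ, (∀ i, a i + b i = c i) ∧
      Majorized (tupleMul a) (tupleMul A) ∧ Majorized (tupleMul b) (tupleMul B) := by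
  obtain ⟨hsum, hweak⟩ := majorized_tupleMul_iff.1 hmaj
  have hA_le : ∀ i, A i ≤ ∑ i, A i := fun i => single_le_sum (fun _ _ => Nat.zero_le _) (mem_univ i)
  have hB_le : ∀ i, B i ≤ ∑ i, B i := fun i => single_le_sum (fun _ _ => Nat.zero_le _) (mem_univ i)
  set height : Fin (∑ i, A i) ⊕ Fin (∑ i, B i) → ℕ :=
    Sum.elim (fun l => #{i | (l : ℕ) < A i}) (fun l => #{i | (l : ℕ) < B i})
  obtain ⟨R, hRcard, hRcol⟩ := exists_rows_of_sum_le_sum_min c univ height fun S _ => by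
    calc ∑ i ∈ S, c i ≤ kMaxSum (tupleMul fun i => A i + B i) #S := hweak S
      _ ≤ ∑ l : Fin (∑ i, A i), min #{i | (l : ℕ) < A i} #S +
          ∑ l : Fin (∑ i, B i), min #{i | (l : ℕ) < B i} #S :=
        kMaxSum_tupleMul_le_iff.2 fun S' hS' => by
          rw [sum_add_distrib]
          gcongr
          · exact (sum_le_sum_min_card_lt A hA_le S').trans (by gcongr)
          · exact (sum_le_sum_min_card_lt B hB_le S').trans (by gcongr)
      _ = ∑ l, min (height l) #S := (Fintype.sum_sum_type fun l => min (height l) #S).symm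
  have ha : WeaklyMajorized (fun i => #(R i).toLeft) A := fun S =>
    (sum_card_le_sum_min (fun l => by simpa [height] using hRcol (.inl l)) S).trans
      (sum_min_card_lt_le_kMaxSum hA _ _)
  have hb : WeaklyMajorized (fun i => #(R i).toRight) B := fun S =>
    (sum_card_le_sum_min (fun l => by simpa [height] using hRcol (.inr l)) S).trans
      (sum_min_card_lt_le_kMaxSum hB _ _)
  have hab : ∀ i, #(R i).toLeft + #(R i).toRight = c i := fun i => by
    rw [card_toLeft_add_card_toRight, hRcard i (mem_univ i)]
  have htot : ∑ i, (#(R i).toLeft + #(R i).toRight) = ∑ i, A i + ∑ i, B i := by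
    simp only [hab, hsum, sum_add_distrib]
  rw [sum_add_distrib] at htot
  have := ha.sum_le; have := hb.sum_le
  exact ⟨_, _, hab, majorized_tupleMul_iff.2 ⟨by omega, ha⟩,
    majorized_tupleMul_iff.2 ⟨by omega, hb⟩⟩

theorem stmt1_general (s : ℕ)
    (d t A B : Fin s → ℕ)
    (hd : Antitone d) (ht : Antitone t) (hA : Antitone A) (hB : Antitone B)
    (hdt : ∀ i, t i ≤ d i)
    (hmaj : Majorized (tupleMul (fun i => d i - t i)) (tupleMul (fun i => A i + B i))) :
    ∃ f : Fin s → ℕ,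
      Antitone f ∧
      (∀ i, t i ≤ f i ∧ f i ≤ d i) ∧
      Majorized (tupleMul (fun i => f i - t i)) (tupleMul A) ∧
      Majorized (tupleMul (fun i => d i - f i)) (tupleMul B) := by
  obtain ⟨a, b, hab, ha, hb⟩ := exists_add_eq_of_majorized_add hA hB hmaj
  refine exists_antitone_of_moveUnit (f := fun i => t i + a i) ?_ ⟨fun i => ?_, ?_, ?_⟩
  · rintro f x y ⟨hf, hfA, hfB⟩ hxy hlt
    obtain ⟨hg, hgf, hgf'⟩ := moveUnit_interpolant hd ht hf hxy hlt
    exact ⟨hg, hgf.trans hfA, hgf'.trans hfB⟩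
  · dsimp only
    have := hab i; have := hdt i; omega
  · simpa using ha
  · convert hb using 3 with i
    dsimp only
    have := hab i; have := hdt i; omega

theorem stmt1 (s : ℕ) (hs : 0 < s)
    (d t A B : Fin s → ℕ)
    (hd : Antitone d) (ht : Antitone t) (hA : Antitone A) (hB : Antitone B)
    (hdt : ∀ i, t i ≤ d i)
    (hmaj : Majorized (tupleMul (fun i => d i - t i)) (tupleMul (fun i => A i + B i))) :
    ∃ f : Fin s → ℕ,
      Antitone f ∧
      (∀ i, t i ≤ f i ∧ f i ≤ d i) ∧
      Majorized (tupleMul (fun i => f i - t i)) (tupleMul A) ∧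
      Majorized (tupleMul (fun i => d i - f i)) (tupleMul B) :=
  stmt1_general s d t A B hd ht hA hB hdt hmaj
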